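/- (Lemma 3.1, part 2: Normalization Property.) For the CPU algorithm iterates: for every iteration k ≥ 1 and every layer 0 ≤ n ≤ N, lim_{r→∞} Σ_{m∈C_n} p_n^{k,r}(m) = 1; in particular the converged layer values satisfy Σ_{m∈C_n} p_n^{k}(m) = 1 for every k ≥ 2 and every n. -/

import Mathlib

open Finset Filter

/-- Number of busy units in state `B`. -/
def wt {N : ℕ} (B : Fin N → Bool) : ℕ := (Finset.univ.filter fun i => B i = true).card

/-- The layer `C_n`: states with exactly `n` busy units. -/
def layer (N n : ℕ) : Finset (Fin N → Bool) := Finset.univ.filter fun B => wt B = n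

/-- The full state: all units busy. -/
def fullState (N : ℕ) : Fin N → Bool := fun _ => true

/-- Unit `i` is the most preferred free unit at node `j` in state `l`
(ranks are given by the permutation `ζ j`). -/
def dispatched {N J : ℕ} (ζ : Fin J → (Fin N ≃ Fin N)) (l : Fin N → Bool) (j : Fin J)
    (i : Fin N) : Prop :=
  l i = false ∧ ∀ h : Fin N, (h : ℕ) < ((ζ j).symm i : ℕ) → l ((ζ j) h) = true

instance {N J : ℕ} (ζ : Fin J → (Fin N ≃ Fin N)) (l : Fin N → Bool) (j : Fin J) (i : Fin N) :
    Decidable (dispatched ζ l j i) := by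
  unfold dispatched; infer_instance

/-- Upward transition rate `λ_{lm}`: nonzero only if `m` arises from `l` by flipping
one coordinate `i` from free to busy, in which case it is `λ` times the total demand
fraction of the nodes dispatching unit `i` in state `l`. -/
noncomputable def upRate {N J : ℕ} (lam : ℝ) (f : Fin J → ℝ) (ζ : Fin J → (Fin N ≃ Fin N))
    (l m : Fin N → Bool) : ℝ :=
  ∑ i : Fin N,
    if l i = false ∧ m = Function.update l i true then
      lam * ∑ j : Fin J, if dispatched ζ l j i then f j else 0
    else 0

/-- Downward transition rate `μ_{lm}`: nonzero only if `m` arises from `l` by flipping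
one coordinate `i` from busy to free, in which case it is `ν i`. -/
noncomputable def downRate {N : ℕ} (ν : Fin N → ℝ) (l m : Fin N → Bool) : ℝ :=
  ∑ i : Fin N, if l i = true ∧ m = Function.update l i false then ν i else 0

/-- Total upward rate `λ_m = Σ_l λ_{ml}` out of state `m`. -/
noncomputable def totalUp {N J : ℕ} (lam : ℝ) (f : Fin J → ℝ) (ζ : Fin J → (Fin N ≃ Fin N))
    (m : Fin N → Bool) : ℝ :=
  ∑ l : Fin N → Bool, upRate lam f ζ m l

/-- Total service completion rate `μ_m = Σ_{i busy} ν i` out of state `m`. -/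
noncomputable def totalDown {N : ℕ} (ν : Fin N → ℝ) (m : Fin N → Bool) : ℝ :=
  ∑ i : Fin N, if m i = true then ν i else 0

/-- `C^m_n`: the states of layer `n` at Hamming distance 1 from `m`. -/
def adjLayer {N : ℕ} (n : ℕ) (m : Fin N → Bool) : Finset (Fin N → Bool) :=
  (layer N n).filter fun l => (Finset.univ.filter fun i => l i ≠ m i).card = 1

/-- `λ^k(n) = Σ_{m ∈ C_n} p_n^k(m) · λ_m`. -/
noncomputable def lamI {N J : ℕ} (lam : ℝ) (f : Fin J → ℝ) (ζ : Fin J → (Fin N ≃ Fin N))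
    (pI : ℕ → ℕ → (Fin N → Bool) → ℝ) (k n : ℕ) : ℝ :=
  ∑ m ∈ layer N n, pI k n m * totalUp lam f ζ m

/-- `μ^k(n) = Σ_{m ∈ C_n} p_n^k(m) · μ_m`. -/
noncomputable def muI {N : ℕ} (ν : Fin N → ℝ) (pI : ℕ → ℕ → (Fin N → Bool) → ℝ) (k n : ℕ) : ℝ :=
  ∑ m ∈ layer N n, pI k n m * totalDown ν m

/-- `μ^{k,r}(n) = Σ_{m ∈ C_n} p_n^{k,r}(m) · μ_m`. -/
noncomputable def muR {N : ℕ} (ν : Fin N → ℝ) (pR : ℕ → ℕ → ℕ → (Fin N → Bool) → ℝ)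
    (k n r : ℕ) : ℝ :=
  ∑ m ∈ layer N n, pR k n r m * totalDown ν m

/-- The iterates of the CPU (Conditional Probability Update) algorithm:
`pI k n m` is the converged outer iterate `p_n^k(m)` and `pR k n r m` is the inner
iterate `p_n^{k,r}(m)`.  The converged value `p_n^k` is by definition the limit of
the inner iterates as `r → ∞`. -/
def IsCPUIterates {N J : ℕ} (lam : ℝ) (f : Fin J → ℝ) (ζ : Fin J → (Fin N ≃ Fin N))
    (ν : Fin N → ℝ) (pI : ℕ → ℕ → (Fin N → Bool) → ℝ)
    (pR : ℕ → ℕ → ℕ → (Fin N → Bool) → ℝ) : Prop :=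
  (∀ n ≤ N, ∀ m ∈ layer N n, pI 0 n m = 0) ∧
  (∀ n ≤ N, ∀ m ∈ layer N n, pI 1 n m = 1 / (N.choose n : ℝ)) ∧
  (∀ n ≤ N, ∀ r, 1 ≤ r → ∀ m ∈ layer N n, pR 1 n r m = 1 / (N.choose n : ℝ)) ∧
  (∀ k, 1 ≤ k → ∀ m ∈ layer N 0, pI k 0 m = 1) ∧
  (∀ k, 1 ≤ k → ∀ m ∈ layer N N, pI k N m = 1) ∧
  (∀ k, 2 ≤ k → ∀ r, ∀ m ∈ layer N 0, pR k 0 r m = 1) ∧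
  (∀ k, 2 ≤ k → ∀ r, ∀ m ∈ layer N N, pR k N r m = 1) ∧
  (∀ k, 2 ≤ k → ∀ n, 1 ≤ n → n ≤ N - 1 → ∀ m ∈ layer N n, pR k n 0 m = pI (k - 1) n m) ∧
  (∀ k, 2 ≤ k → ∀ n, 1 ≤ n → n ≤ N - 1 → ∀ r, 1 ≤ r → ∀ m ∈ layer N n,
    pR k n r m =
      (∑ l ∈ layer N (n - 1),
        pI k (n - 1) l * (muR ν pR k n (r - 1) / lamI lam f ζ pI k (n - 1)) *
          (upRate lam f ζ l m / (totalUp lam f ζ m + totalDown ν m))) +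
      (∑ l ∈ adjLayer (n + 1) m,
        pI (k - 1) (n + 1) l * (lamI lam f ζ pI (k - 1) n / muI ν pI (k - 1) (n + 1)) *
          (downRate ν l m / (totalUp lam f ζ m + totalDown ν m)))) ∧
  (∀ k, 2 ≤ k → ∀ n, 1 ≤ n → n ≤ N - 1 → ∀ m ∈ layer N n,
    Filter.Tendsto (fun r => pR k n r m) Filter.atTop (nhds (pI k n m)))

/-!
Write `S_k(n) = ∑_{m ∈ C_n} p_n^k(m)`. In a state with a free unit every node dispatches exactly
one unit, so `λ_m = λ` and `λ^k(n) = λ · S_k(n)` for `n < N`. Letting `r → ∞` in the inner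
recursion gives a balance equation for `p_n^k`; multiplying it by `λ_m + μ_m` and summing over
`C_n`, the inflow from `C_{n-1}` adds up to `μ^k(n)` and the inflow from `C_{n+1}` to
`λ^{k-1}(n)`, whence `λ^k(n) = λ^{k-1}(n)`, i.e. `S_k(n) = S_{k-1}(n)`. Induction on `k`, and
within an iteration on `n`, propagates `S_k(n) = 1` from the uniform start; nonnegativity is
carried along because it is what keeps `μ^{k-1}(n+1)` away from `0`.
-/

section States

variable {N : ℕ}

@[simp] lemma mem_layer {n : ℕ} {m : Fin N → Bool} : m ∈ layer N n ↔ wt m = n := by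
  simp [layer]

lemma wt_update_true {l : Fin N → Bool} {i : Fin N} (hi : l i = false) :
    wt (Function.update l i true) = wt l + 1 := by
  have : (univ.filter fun x => Function.update l i true x = true) =
      insert i (univ.filter fun x => l x = true) := by
    ext x
    rcases eq_or_ne x i with rfl | hx <;> simp [*]
  rw [wt, wt, this, card_insert_of_notMem (by simp [hi])]

lemma wt_update_false {l : Fin N → Bool} {i : Fin N} (hi : l i = true) :
    wt (Function.update l i false) + 1 = wt l := by
  have h := wt_update_true (l := Function.update l i false) (i := i) (by simp)
  rwa [Function.update_idem, Function.update_eq_self_iff.mpr hi.symm, eq_comm] at h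

lemma exists_eq_false_of_wt_lt {m : Fin N → Bool} (h : wt m < N) : ∃ i, m i = false := by
  by_contra! hm
  simp [wt, hm] at h

lemma card_layer (n : ℕ) : #(layer N n) = N.choose n := by
  rw [show N.choose n = #(powersetCard n (univ : Finset (Fin N))) by simp]
  refine card_nbij' (fun B => univ.filter fun i => B i = true) (fun s i => decide (i ∈ s))
    ?_ ?_ ?_ ?_ <;> intro x hx
  · simpa [wt] using hx
  · simpa [wt] using hx
  · ext i; simp
  · ext i; simp

end States

section Dispatch

variable {N J : ℕ} {ζ : Fin J → (Fin N ≃ Fin N)} {m : Fin N → Bool} {j : Fin J}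

lemma dispatched.unique {i i' : Fin N} (hi : dispatched ζ m j i) (hi' : dispatched ζ m j i') :
    i = i' := by
  have key : ∀ {a b : Fin N}, dispatched ζ m j a → dispatched ζ m j b →
      ¬ ((ζ j).symm a : ℕ) < (ζ j).symm b := fun ha hb hlt => by
    simpa [ha.1] using hb.2 _ hlt
  exact (ζ j).symm.injective <| Fin.ext <| le_antisymm
    (not_lt.mp (key hi' hi)) (not_lt.mp (key hi hi'))

lemma exists_dispatched (hm : ∃ i, m i = false) : ∃ i, dispatched ζ m j i := by
  obtain ⟨i, hi, hmin⟩ := (univ.filter fun i => m i = false).exists_min_image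
    (fun i => (ζ j).symm i) (by simpa [Finset.Nonempty] using hm)
  refine ⟨i, (mem_filter.mp hi).2, fun h hlt => ?_⟩
  by_contra hbusy
  have := hmin (ζ j h) (by simpa using hbusy)
  simp only [Equiv.symm_apply_apply] at this
  exact absurd hlt (not_lt.mpr this)

lemma sum_ite_dispatched (hm : ∃ i, m i = false) (c : ℝ) :
    (∑ i, if dispatched ζ m j i then c else 0) = c := by
  obtain ⟨i, hi⟩ := exists_dispatched (j := j) hm
  rw [sum_eq_single_of_mem i (mem_univ i) fun i' _ hne => if_neg fun hi' => hne (hi'.unique hi),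
    if_pos hi]

end Dispatch

section Rates

variable {N J : ℕ} (lam : ℝ) (f : Fin J → ℝ) (ζ : Fin J → (Fin N ≃ Fin N)) (ν : Fin N → ℝ)

lemma totalUp_eq_of_exists_free (hfsum : ∑ j, f j = 1) {m : Fin N → Bool}
    (hm : ∃ i, m i = false) : totalUp lam f ζ m = lam := by
  have hrow : ∀ i, (∑ l : Fin N → Bool,
      if m i = false ∧ l = Function.update m i true then
        lam * ∑ j, (if dispatched ζ m j i then f j else 0) else 0) =
      lam * ∑ j, (if dispatched ζ m j i then f j else 0) := by
    intro i
    by_cases hi : m i = false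
    · simp [hi]
    · simp [hi, dispatched]
  simp only [totalUp, upRate]
  rw [sum_comm]
  simp only [hrow, ← mul_sum]
  rw [sum_comm]
  simp only [sum_ite_dispatched hm, hfsum, mul_one]

lemma upRate_eq_zero_of_wt_ne {l m : Fin N → Bool} (h : wt m ≠ wt l + 1) :
    upRate lam f ζ l m = 0 :=
  sum_eq_zero fun _ _ => if_neg fun ⟨hi, hm⟩ => h (hm ▸ wt_update_true hi)

lemma downRate_eq_zero_of_wt_ne {l m : Fin N → Bool} (h : wt l ≠ wt m + 1) :
    downRate ν l m = 0 :=
  sum_eq_zero fun _ _ => if_neg fun ⟨hi, hm⟩ => h (hm ▸ (wt_update_false hi).symm)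

lemma downRate_eq_zero_of_notMem_adjLayer {n : ℕ} {l m : Fin N → Bool} (hl : l ∈ layer N n)
    (hadj : l ∉ adjLayer n m) : downRate ν l m = 0 := by
  refine sum_eq_zero fun i _ => if_neg ?_
  rintro ⟨hi, rfl⟩
  refine hadj (mem_filter.mpr ⟨hl, card_eq_one.mpr ⟨i, ?_⟩⟩)
  ext x
  rcases eq_or_ne x i with rfl | hx <;> simp [*]

lemma sum_layer_upRate {l : Fin N → Bool} {n : ℕ} (hl : wt l + 1 = n) :
    ∑ m ∈ layer N n, upRate lam f ζ l m = totalUp lam f ζ l :=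
  sum_subset (subset_univ _) fun _ _ hm =>
    upRate_eq_zero_of_wt_ne lam f ζ fun h => hm (mem_layer.mpr (h.trans hl))

lemma sum_downRate (l : Fin N → Bool) : ∑ m, downRate ν l m = totalDown ν l := by
  simp only [downRate, totalDown]
  rw [sum_comm]
  refine sum_congr rfl fun i _ => ?_
  by_cases hi : l i = true <;> simp [hi]

lemma sum_layer_downRate {l : Fin N → Bool} {n : ℕ} (hl : wt l = n + 1) :
    ∑ m ∈ layer N n, downRate ν l m = totalDown ν l := by
  rw [← sum_downRate]
  exact sum_subset (subset_univ _) fun _ _ hm =>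
    downRate_eq_zero_of_wt_ne ν fun h => hm (mem_layer.mpr (by omega))

lemma sum_layer_sum_layer_upRate {n : ℕ} (hn : 1 ≤ n) (G : (Fin N → Bool) → ℝ) :
    ∑ m ∈ layer N n, ∑ l ∈ layer N (n - 1), G l * upRate lam f ζ l m =
      ∑ l ∈ layer N (n - 1), G l * totalUp lam f ζ l := by
  rw [sum_comm]
  refine sum_congr rfl fun l hl => ?_
  rw [← mul_sum, sum_layer_upRate lam f ζ (by rw [mem_layer.mp hl]; omega)]

lemma sum_layer_sum_adjLayer_downRate (n : ℕ) (G : (Fin N → Bool) → ℝ) :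
    ∑ m ∈ layer N n, ∑ l ∈ adjLayer (n + 1) m, G l * downRate ν l m =
      ∑ l ∈ layer N (n + 1), G l * totalDown ν l := by
  have hadj : ∀ m, ∑ l ∈ adjLayer (n + 1) m, G l * downRate ν l m =
      ∑ l ∈ layer N (n + 1), G l * downRate ν l m := fun m =>
    sum_subset (filter_subset _ _) fun l hl hadj => by
      rw [downRate_eq_zero_of_notMem_adjLayer ν hl hadj, mul_zero]
  simp only [hadj]
  rw [sum_comm]
  refine sum_congr rfl fun l hl => ?_
  rw [← mul_sum, sum_layer_downRate ν (mem_layer.mp hl)]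

variable {lam f ν}

lemma upRate_nonneg (hlam : 0 ≤ lam) (hf : ∀ j, 0 ≤ f j) (l m : Fin N → Bool) :
    0 ≤ upRate lam f ζ l m :=
  sum_nonneg fun _ _ => by
    split_ifs
    · exact mul_nonneg hlam (sum_nonneg fun j _ => by split_ifs <;> simp [hf j])
    · rfl

lemma totalUp_nonneg (hlam : 0 ≤ lam) (hf : ∀ j, 0 ≤ f j) (m : Fin N → Bool) :
    0 ≤ totalUp lam f ζ m :=
  sum_nonneg fun l _ => upRate_nonneg ζ hlam hf m l

lemma downRate_nonneg (hν : ∀ i, 0 ≤ ν i) (l m : Fin N → Bool) : 0 ≤ downRate ν l m :=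
  sum_nonneg fun i _ => by split_ifs <;> simp [hν i]

lemma totalDown_nonneg (hν : ∀ i, 0 ≤ ν i) (m : Fin N → Bool) : 0 ≤ totalDown ν m :=
  sum_nonneg fun i _ => by split_ifs <;> simp [hν i]

lemma totalDown_pos (hν : ∀ i, 0 < ν i) {m : Fin N → Bool} (hm : wt m ≠ 0) :
    0 < totalDown ν m := by
  obtain ⟨i, hi⟩ : ∃ i, m i = true := by
    by_contra! h
    simp [wt, h] at hm
  calc 0 < ν i := hν i
    _ ≤ totalDown ν m := by
      simpa [totalDown, hi] using single_le_sum (fun i' _ => by split_ifs <;> simp [(hν i').le])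
        (mem_univ i) (f := fun i' => if m i' = true then ν i' else 0)

end Rates

def IsLayerDistribution (N n : ℕ) (p : (Fin N → Bool) → ℝ) : Prop :=
  (∀ m ∈ layer N n, 0 ≤ p m) ∧ ∑ m ∈ layer N n, p m = 1

section LayerDistribution

variable {N J : ℕ} {n : ℕ} {p : (Fin N → Bool) → ℝ}

lemma isLayerDistribution_uniform (hn : n ≤ N) (hp : ∀ m ∈ layer N n, p m = 1 / N.choose n) :
    IsLayerDistribution N n p := by
  have hchoose : (N.choose n : ℝ) ≠ 0 := Nat.cast_ne_zero.mpr (Nat.choose_pos hn).ne'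
  refine ⟨fun m hm => by rw [hp m hm]; positivity, ?_⟩
  rw [sum_congr rfl hp, sum_const, card_layer, nsmul_eq_mul, mul_one_div_cancel hchoose]

lemma isLayerDistribution_of_eq_one (hn : n = 0 ∨ n = N) (hp : ∀ m ∈ layer N n, p m = 1) :
    IsLayerDistribution N n p := by
  rcases hn with rfl | rfl <;> exact isLayerDistribution_uniform (by omega) (by simpa using hp)

lemma lamI_eq_mul_sum {lam : ℝ} {f : Fin J → ℝ} (hfsum : ∑ j, f j = 1)
    (ζ : Fin J → (Fin N ≃ Fin N)) (pI : ℕ → ℕ → (Fin N → Bool) → ℝ) (k : ℕ) (hn : n < N) :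
    lamI lam f ζ pI k n = lam * ∑ m ∈ layer N n, pI k n m := by
  rw [lamI, mul_sum]
  refine sum_congr rfl fun m hm => ?_
  rw [totalUp_eq_of_exists_free lam f ζ hfsum
    (exists_eq_false_of_wt_lt ((mem_layer.mp hm).trans_lt hn)), mul_comm]

lemma muI_pos {ν : Fin N → ℝ} (hν : ∀ i, 0 < ν i) {pI : ℕ → ℕ → (Fin N → Bool) → ℝ} {k : ℕ}
    (hn : n ≠ 0) (hp : IsLayerDistribution N n (pI k n)) : 0 < muI ν pI k n := by
  obtain ⟨m, hm, hpos⟩ : ∃ m ∈ layer N n, 0 < pI k n m := by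
    by_contra! h
    linarith [sum_nonpos h, hp.2]
  exact sum_pos' (fun m hm => mul_nonneg (hp.1 m hm) (totalDown_nonneg (fun i => (hν i).le) m))
    ⟨m, hm, mul_pos hpos (totalDown_pos hν ((mem_layer.mp hm).trans_ne hn))⟩

end LayerDistribution

namespace IsCPUIterates

variable {N J : ℕ} {lam : ℝ} {f : Fin J → ℝ} {ζ : Fin J → (Fin N ≃ Fin N)} {ν : Fin N → ℝ}
  {pI : ℕ → ℕ → (Fin N → Bool) → ℝ} {pR : ℕ → ℕ → ℕ → (Fin N → Bool) → ℝ} {k n : ℕ}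

lemma tendsto_pR (h : IsCPUIterates lam f ζ ν pI pR) (hk : 2 ≤ k) (hn : n ≤ N) {m : Fin N → Bool}
    (hm : m ∈ layer N n) : Tendsto (fun r => pR k n r m) atTop (nhds (pI k n m)) := by
  obtain ⟨-, -, -, hI0, hIN, hR0, hRN, -, -, hlim⟩ := h
  rcases Nat.eq_zero_or_pos n with rfl | hn1
  · simp only [hR0 k hk _ m hm, hI0 k (by omega) m hm, tendsto_const_nhds]
  rcases hn.eq_or_lt with rfl | hnN
  · simp only [hRN k hk _ m hm, hIN k (by omega) m hm, tendsto_const_nhds]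
  exact hlim k hk n hn1 (by omega) m hm

lemma tendsto_muR (h : IsCPUIterates lam f ζ ν pI pR) (hk : 2 ≤ k) (hn : n ≤ N) :
    Tendsto (fun r => muR ν pR k n r) atTop (nhds (muI ν pI k n)) :=
  tendsto_finsetSum _ fun _ hm => (h.tendsto_pR hk hn hm).mul_const _

lemma pI_nonneg (h : IsCPUIterates lam f ζ ν pI pR) (hlam : 0 ≤ lam) (hf : ∀ j, 0 ≤ f j)
    (hν : ∀ i, 0 ≤ ν i) (hk : 2 ≤ k) (hn1 : 1 ≤ n) (hn2 : n ≤ N - 1)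
    (hprev : ∀ l ∈ layer N (n - 1), 0 ≤ pI k (n - 1) l)
    (hcur : ∀ m ∈ layer N n, 0 ≤ pI (k - 1) n m)
    (hnext : ∀ l ∈ layer N (n + 1), 0 ≤ pI (k - 1) (n + 1) l) :
    ∀ m ∈ layer N n, 0 ≤ pI k n m := by
  obtain ⟨-, -, -, -, -, -, -, hinit, hrec, hlim⟩ := h
  have hD : ∀ m, 0 ≤ totalUp lam f ζ m + totalDown ν m := fun m =>
    add_nonneg (totalUp_nonneg ζ hlam hf m) (totalDown_nonneg hν m)
  have hL : 0 ≤ lamI lam f ζ pI k (n - 1) :=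
    sum_nonneg fun l hl => mul_nonneg (hprev l hl) (totalUp_nonneg ζ hlam hf l)
  have hΛ : 0 ≤ lamI lam f ζ pI (k - 1) n :=
    sum_nonneg fun m hm => mul_nonneg (hcur m hm) (totalUp_nonneg ζ hlam hf m)
  have hM : 0 ≤ muI ν pI (k - 1) (n + 1) :=
    sum_nonneg fun l hl => mul_nonneg (hnext l hl) (totalDown_nonneg hν l)
  have hR : ∀ r, ∀ m ∈ layer N n, 0 ≤ pR k n r m := by
    intro r
    induction r with
    | zero => exact fun m hm => (hinit k hk n hn1 hn2 m hm).symm ▸ hcur m hm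
    | succ r ih =>
      intro m hm
      have hμ : 0 ≤ muR ν pR k n r :=
        sum_nonneg fun m' hm' => mul_nonneg (ih m' hm') (totalDown_nonneg hν m')
      rw [hrec k hk n hn1 hn2 (r + 1) (by omega) m hm, Nat.add_sub_cancel]
      refine add_nonneg (sum_nonneg fun l hl => ?_) (sum_nonneg fun l hl => ?_)
      · exact mul_nonneg (mul_nonneg (hprev l hl) (div_nonneg hμ hL))
          (div_nonneg (upRate_nonneg ζ hlam hf l m) (hD m))
      · exact mul_nonneg (mul_nonneg (hnext l (mem_filter.mp hl).1) (div_nonneg hΛ hM))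
          (div_nonneg (downRate_nonneg hν l m) (hD m))
  exact fun m hm => ge_of_tendsto' (hlim k hk n hn1 hn2 m hm) fun r => hR r m hm

lemma pI_mul_outRate_eq_inflow (h : IsCPUIterates lam f ζ ν pI pR) (hk : 2 ≤ k) (hn1 : 1 ≤ n)
    (hn2 : n ≤ N - 1) {m : Fin N → Bool} (hm : m ∈ layer N n)
    (hD : totalUp lam f ζ m + totalDown ν m ≠ 0) :
    pI k n m * (totalUp lam f ζ m + totalDown ν m) =
      muI ν pI k n / lamI lam f ζ pI k (n - 1) *
          ∑ l ∈ layer N (n - 1), pI k (n - 1) l * upRate lam f ζ l m +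
        lamI lam f ζ pI (k - 1) n / muI ν pI (k - 1) (n + 1) *
          ∑ l ∈ adjLayer (n + 1) m, pI (k - 1) (n + 1) l * downRate ν l m := by
  set D := totalUp lam f ζ m + totalDown ν m
  set L := lamI lam f ζ pI k (n - 1)
  set U := ∑ l ∈ layer N (n - 1), pI k (n - 1) l * upRate lam f ζ l m with hU
  set V := lamI lam f ζ pI (k - 1) n / muI ν pI (k - 1) (n + 1) *
    ∑ l ∈ adjLayer (n + 1) m, pI (k - 1) (n + 1) l * downRate ν l m with hV
  have ⟨_, _, _, _, _, _, _, _, hstep, _⟩ := h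
  have hrec : ∀ r, pR k n (r + 1) m = (muR ν pR k n r / L * U + V) / D := by
    intro r
    rw [hstep k hk n hn1 hn2 (r + 1) (by omega) m hm, Nat.add_sub_cancel, add_div,
      hU, hV, mul_sum, mul_sum, sum_div, sum_div]
    congr 1 <;> exact sum_congr rfl fun l _ => by ring
  have hlim : Tendsto (fun r => pR k n (r + 1) m) atTop
      (nhds ((muI ν pI k n / L * U + V) / D)) := by
    simp only [hrec]
    exact (((h.tendsto_muR hk (by omega)).div_const L).mul_const U |>.add_const V).div_const D
  rw [tendsto_nhds_unique ((h.tendsto_pR hk (by omega) hm).comp (tendsto_add_atTop_nat 1)) hlim,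
    div_mul_cancel₀ _ hD]

lemma lamI_eq_lamI_sub_one (h : IsCPUIterates lam f ζ ν pI pR) (hk : 2 ≤ k) (hn1 : 1 ≤ n)
    (hn2 : n ≤ N - 1) (hD : ∀ m ∈ layer N n, totalUp lam f ζ m + totalDown ν m ≠ 0)
    (hL : lamI lam f ζ pI k (n - 1) ≠ 0) (hM : muI ν pI (k - 1) (n + 1) ≠ 0) :
    lamI lam f ζ pI k n = lamI lam f ζ pI (k - 1) n := by
  have hlhs : ∑ m ∈ layer N n, pI k n m * (totalUp lam f ζ m + totalDown ν m) =
      lamI lam f ζ pI k n + muI ν pI k n := by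
    simp only [mul_add, sum_add_distrib]
    rfl
  have hup : ∑ m ∈ layer N n, ∑ l ∈ layer N (n - 1), pI k (n - 1) l * upRate lam f ζ l m =
      lamI lam f ζ pI k (n - 1) :=
    sum_layer_sum_layer_upRate lam f ζ hn1 _
  have hdown : ∑ m ∈ layer N n, ∑ l ∈ adjLayer (n + 1) m,
      pI (k - 1) (n + 1) l * downRate ν l m = muI ν pI (k - 1) (n + 1) :=
    sum_layer_sum_adjLayer_downRate ν n _
  have hbalance := sum_congr rfl fun m hm => h.pI_mul_outRate_eq_inflow hk hn1 hn2 hm (hD m hm)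
  rw [hlhs, sum_add_distrib, ← mul_sum, ← mul_sum, hup, hdown, div_mul_cancel₀ _ hL,
    div_mul_cancel₀ _ hM] at hbalance
  linarith

lemma isLayerDistribution_pI_of_neighbours (h : IsCPUIterates lam f ζ ν pI pR) (hlam : 0 < lam)
    (hf : ∀ j, 0 ≤ f j) (hfsum : ∑ j, f j = 1) (hν : ∀ i, 0 < ν i) (hk : 2 ≤ k) (hn1 : 1 ≤ n)
    (hn2 : n ≤ N - 1) (hprev : IsLayerDistribution N (n - 1) (pI k (n - 1)))
    (hcur : IsLayerDistribution N n (pI (k - 1) n))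
    (hnext : IsLayerDistribution N (n + 1) (pI (k - 1) (n + 1))) :
    IsLayerDistribution N n (pI k n) := by
  refine ⟨h.pI_nonneg hlam.le hf (fun i => (hν i).le) hk hn1 hn2 hprev.1 hcur.1 hnext.1, ?_⟩
  have hD : ∀ m ∈ layer N n, totalUp lam f ζ m + totalDown ν m ≠ 0 := fun m hm =>
    (add_pos_of_nonneg_of_pos (totalUp_nonneg ζ hlam.le hf m)
      (totalDown_pos hν ((mem_layer.mp hm).trans_ne (by omega)))).ne'
  have hL : lamI lam f ζ pI k (n - 1) = lam := by
    rw [lamI_eq_mul_sum hfsum ζ pI k (by omega), hprev.2, mul_one]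
  have hbalance := h.lamI_eq_lamI_sub_one hk hn1 hn2 hD (by rw [hL]; exact hlam.ne')
    (muI_pos hν (by omega) hnext).ne'
  rw [lamI_eq_mul_sum hfsum ζ pI k (by omega), lamI_eq_mul_sum hfsum ζ pI (k - 1) (by omega),
    hcur.2] at hbalance
  exact mul_left_cancel₀ hlam.ne' hbalance

lemma isLayerDistribution_pI (h : IsCPUIterates lam f ζ ν pI pR) (hlam : 0 < lam)
    (hf : ∀ j, 0 ≤ f j) (hfsum : ∑ j, f j = 1) (hν : ∀ i, 0 < ν i) (hk : 1 ≤ k) :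
    ∀ n ≤ N, IsLayerDistribution N n (pI k n) := by
  have ⟨_, hI1, _, hI0, hIN, _⟩ := h
  induction k, hk using Nat.le_induction with
  | base => exact fun n hn => isLayerDistribution_uniform hn (hI1 n hn)
  | succ k hk ih =>
    intro n hn
    induction n with
    | zero => exact isLayerDistribution_of_eq_one (.inl rfl) (hI0 _ (by omega))
    | succ n ihn =>
      rcases hn.eq_or_lt with hN | hN
      · exact isLayerDistribution_of_eq_one (.inr hN) (hN ▸ hIN _ (by omega))
      simpa using h.isLayerDistribution_pI_of_neighbours hlam hf hfsum hν (k := k + 1) (n := n + 1)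
        (by omega) (by omega) (by omega) (by simpa using ihn (by omega)) (by simpa using ih _ hn)
        (by simpa using ih _ hN)

end IsCPUIterates

theorem cpu_normalization_general
    {N J : ℕ}
    (lam : ℝ) (hlam : 0 < lam)
    (f : Fin J → ℝ) (hf : ∀ j, 0 ≤ f j) (hfsum : ∑ j, f j = 1)
    (ν : Fin N → ℝ) (hν : ∀ i, 0 < ν i)
    (ζ : Fin J → (Fin N ≃ Fin N))
    (pI : ℕ → ℕ → (Fin N → Bool) → ℝ) (pR : ℕ → ℕ → ℕ → (Fin N → Bool) → ℝ)
    (hiter : IsCPUIterates lam f ζ ν pI pR) :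
    (∀ k, 1 ≤ k → ∀ n ≤ N,
      Filter.Tendsto (fun r => ∑ m ∈ layer N n, pR k n r m) Filter.atTop (nhds 1)) ∧
    (∀ k, 2 ≤ k → ∀ n ≤ N, ∑ m ∈ layer N n, pI k n m = 1) := by
  have hdist := fun k (hk : 1 ≤ k) => hiter.isLayerDistribution_pI hlam hf hfsum hν hk
  refine ⟨fun k hk n hn => ?_, fun k hk n hn => (hdist k (by omega) n hn).2⟩
  rcases hk.eq_or_lt with rfl | hk
  · have ⟨_, _, hR1, _⟩ := hiter
    refine tendsto_const_nhds.congr' (eventually_atTop.mpr ⟨1, fun r hr => ?_⟩)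
    exact (isLayerDistribution_uniform hn (hR1 n hn r hr)).2.symm
  · rw [← (hdist k hk.le n hn).2]
    exact tendsto_finsetSum _ fun m hm => hiter.tendsto_pR hk hn hm

/-- Lemma 3.1, part 2 (normalization property). -/
theorem cpu_normalization
    {N J : ℕ} (hN : 2 ≤ N) (hJ : 1 ≤ J)
    (lam : ℝ) (hlam : 0 < lam)
    (f : Fin J → ℝ) (hf : ∀ j, 0 ≤ f j) (hfsum : ∑ j, f j = 1)
    (ν : Fin N → ℝ) (hν : ∀ i, 0 < ν i)
    (ζ : Fin J → (Fin N ≃ Fin N))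
    (pI : ℕ → ℕ → (Fin N → Bool) → ℝ) (pR : ℕ → ℕ → ℕ → (Fin N → Bool) → ℝ)
    (hiter : IsCPUIterates lam f ζ ν pI pR) :
    (∀ k, 1 ≤ k → ∀ n ≤ N,
      Filter.Tendsto (fun r => ∑ m ∈ layer N n, pR k n r m) Filter.atTop (nhds 1)) ∧
    (∀ k, 2 ≤ k → ∀ n ≤ N, ∑ m ∈ layer N n, pI k n m = 1) :=
  cpu_normalization_general lam hlam f hf hfsum ν hν ζ pI pR hiter
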